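/- arXiv:1210.6644 — 7 statements merged into one kernel-verified Lean document; each statement's English description precedes it below -/
import Mathlib

section
/- Let G₁,…,G_k be independent uniformly random 2-element subsets of {1,…,n}. The probability that they form a 'chain' in the sense that each G_{i+1} intersects G₁ ∪ ⋯ ∪ G_i (equivalently, they form a circuit of depth k when parallelized greedily) is at most (2/n)^{k−1} · k!. -/
/-!
Extending a chain of `k` gates by one more gate is the only way to get a chain of `k + 1`
gates, and the new gate must meet the union of the old ones. Since every gate after the first
adds at most one new point, that union has at most `k + 1` points, and a two-element set
meeting a fixed `t`-set can be chosen in at most `t (n - 1)` ways. Hence the number of chains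
of length `k + 1` is at most `(k + 1)! (n - 1)^k · C(n, 2)`, and `(n - 1) = (2 / n) · C(n, 2)`.
-/

open Finset
open scoped Nat

namespace GateChain

abbrev Gate (α : Type*) := {s : Finset α // #s = 2}

variable {α : Type*} [DecidableEq α]

def IsGateChain {k : ℕ} (G : Fin k → Finset α) : Prop :=
  ∀ i : Fin k, 0 < i.1 → ∃ j < i, (G i ∩ G j).Nonempty

lemma biUnion_univ_fin_succ {k : ℕ} (G : Fin (k + 1) → Finset α) :
    univ.biUnion G = univ.biUnion (Fin.init G) ∪ G (Fin.last k) := by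
  ext x
  simp [Fin.exists_fin_succ', Fin.init]

lemma card_union_lt_of_inter_nonempty {s t : Finset α} (h : (s ∩ t).Nonempty) :
    #(s ∪ t) < #s + #t :=
  (card_union_le s t).lt_of_ne fun heq =>
    h.ne_empty (disjoint_iff_inter_eq_empty.mp (card_union_eq_card_add_card.mp heq))

instance {k : ℕ} : DecidablePred (IsGateChain : (Fin k → Finset α) → Prop) :=
  fun _ => by unfold IsGateChain; infer_instance

namespace IsGateChain

variable {k : ℕ}

lemma init {G : Fin (k + 1) → Finset α} (hG : IsGateChain G) : IsGateChain (Fin.init G) := by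
  intro i hi
  obtain ⟨j, hji, hij⟩ := hG i.castSucc hi
  obtain ⟨j, rfl⟩ := Fin.exists_castSucc_eq.mpr (hji.trans (Fin.castSucc_lt_last i)).ne
  exact ⟨j, Fin.castSucc_lt_castSucc_iff.mp hji, hij⟩

lemma inter_last_nonempty {G : Fin (k + 1) → Finset α} (hG : IsGateChain G) (hk : 0 < k) :
    (univ.biUnion (Fin.init G) ∩ G (Fin.last k)).Nonempty := by
  obtain ⟨j, hj, x, hx⟩ := hG (Fin.last k) hk
  obtain ⟨j, rfl⟩ := Fin.exists_castSucc_eq.mpr hj.ne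
  rw [mem_inter] at hx
  exact ⟨x, mem_inter.mpr ⟨mem_biUnion.mpr ⟨j, mem_univ _, hx.2⟩, hx.1⟩⟩

lemma card_biUnion_le {G : Fin k → Finset α} (hG : IsGateChain G) (h2 : ∀ i, #(G i) = 2) :
    #(univ.biUnion G) ≤ k + 1 := by
  induction k with
  | zero => simp
  | succ k ih =>
    rw [biUnion_univ_fin_succ]
    rcases k.eq_zero_or_pos with rfl | hk
    · simp [h2]
    · have := card_union_lt_of_inter_nonempty (hG.inter_last_nonempty hk)
      have := ih hG.init fun i => h2 _
      rw [h2] at *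
      omega

end IsGateChain

variable [Fintype α]

lemma card_gates_mem_le (a : α) :
    #{s : Gate α | a ∈ s.1} ≤ Fintype.card α - 1 := by
  calc #{s : Gate α | a ∈ s.1}
      ≤ #((univ.erase a).map ⟨singleton, singleton_injective⟩) := by
        refine card_le_card_of_injOn (fun s => s.1.erase a) (fun s hs => ?_)
          fun s hs t ht hst => ?_
        · obtain ⟨b, hb⟩ :=
            card_eq_one.mp (by rw [card_erase_of_mem (mem_filter.mp hs).2, s.2])
          have : b ≠ a := (mem_erase.mp (hb ▸ mem_singleton_self b)).1
          simpa [hb] using this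
        · exact Subtype.ext (by
            rw [← insert_erase (mem_filter.mp hs).2, ← insert_erase (mem_filter.mp ht).2]
            exact congrArg (insert a) hst)
    _ = Fintype.card α - 1 := by simp

lemma card_gates_inter_nonempty_le (T : Finset α) :
    #{s : Gate α | (s.1 ∩ T).Nonempty} ≤ #T * (Fintype.card α - 1) := by
  calc #{s : Gate α | (s.1 ∩ T).Nonempty}
      ≤ #(T.biUnion fun a => {s : Gate α | a ∈ s.1}) := by
        refine card_le_card fun s hs => ?_
        obtain ⟨a, ha⟩ := (mem_filter.mp hs).2
        rw [mem_inter] at ha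
        exact mem_biUnion.mpr ⟨a, ha.2, mem_filter.mpr ⟨mem_univ _, ha.1⟩⟩
    _ ≤ #T * (Fintype.card α - 1) :=
        card_biUnion_le_card_mul _ _ _ fun a _ => card_gates_mem_le a

variable (α) in
def chains (k : ℕ) : Finset (Fin k → Gate α) :=
  {G | IsGateChain fun i => (G i).1}

lemma card_chains_succ_le {k : ℕ} (hk : 0 < k) :
    #(chains α (k + 1)) ≤ #(chains α k) * ((k + 1) * (Fintype.card α - 1)) := by
  have hsub : chains α (k + 1) ⊆ (chains α k).biUnion fun H =>
      ({s | (s.1 ∩ univ.biUnion fun i => (H i).1).Nonempty} : Finset _).image (Fin.snoc H) := by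
    intro G hG
    have hG : IsGateChain fun i => (G i).1 := (mem_filter.mp hG).2
    refine mem_biUnion.mpr ⟨Fin.init G, mem_filter.mpr ⟨mem_univ _, hG.init⟩, ?_⟩
    refine mem_image.mpr
      ⟨G (Fin.last k), mem_filter.mpr ⟨mem_univ _, ?_⟩, Fin.snoc_init_self G⟩
    rw [inter_comm]
    exact hG.inter_last_nonempty hk
  refine (card_le_card hsub).trans (card_biUnion_le_card_mul _ _ _ fun H hH => ?_)
  calc _ ≤ #{s : Gate α | (s.1 ∩ univ.biUnion fun i => (H i).1).Nonempty} :=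
        card_image_le
    _ ≤ #(univ.biUnion fun i => (H i).1) * (Fintype.card α - 1) := card_gates_inter_nonempty_le _
    _ ≤ (k + 1) * (Fintype.card α - 1) :=
        Nat.mul_le_mul_right _ ((mem_filter.mp hH).2.card_biUnion_le fun i => (H i).2)

lemma card_chains_succ_le_factorial (k : ℕ) :
    #(chains α (k + 1)) ≤ (k + 1)! * (Fintype.card α - 1) ^ k * (Fintype.card α).choose 2 := by
  induction k with
  | zero => simpa using (card_le_univ (chains α 1)).trans_eq (by simp [Fintype.card_finset_len])
  | succ k ih =>
    calc #(chains α (k + 2)) ≤ #(chains α (k + 1)) * ((k + 2) * (Fintype.card α - 1)) :=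
          card_chains_succ_le k.succ_pos
      _ ≤ (k + 1)! * (Fintype.card α - 1) ^ k * (Fintype.card α).choose 2 *
            ((k + 2) * (Fintype.card α - 1)) := Nat.mul_le_mul_right _ ih
      _ = (k + 2)! * (Fintype.card α - 1) ^ (k + 1) * (Fintype.card α).choose 2 := by
          rw [Nat.factorial_succ (k + 1)]; ring

end GateChain

lemma Nat.cast_sub_one_eq_two_div_mul_choose_two (n : ℕ) :
    ((n - 1 : ℕ) : ℝ) = 2 / n * (n.choose 2 : ℕ) := by
  rcases n with _ | n
  · simp
  · push_cast [Nat.cast_choose_two]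
    field_simp
    ring

open Classical in
theorem stmt_7_general (n k : ℕ) :
    (((Finset.univ : Finset (Fin k → {s : Finset (Fin n) // s.card = 2})).filter
        (fun G => ∀ i : Fin k, 0 < i.1 →
          ∃ j : Fin k, j < i ∧ ((G i).1 ∩ (G j).1).Nonempty)).card : ℝ) /
      ((Finset.univ : Finset (Fin k → {s : Finset (Fin n) // s.card = 2})).card : ℝ)
    ≤ (2/(n:ℝ))^(k-1) * (k.factorial) := by
  change (#(GateChain.chains (Fin n) k) : ℝ) / _ ≤ _
  rcases k with _ | k
  · simp [GateChain.chains, GateChain.IsGateChain]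
  have hchains := GateChain.card_chains_succ_le_factorial (α := Fin n) k
  rw [Fintype.card_fin] at hchains
  refine div_le_of_le_mul₀ (by positivity) (by positivity) ?_
  rw [card_univ, Fintype.card_pi, prod_const, Fintype.card_finset_len, Fintype.card_fin,
    card_univ, Fintype.card_fin]
  calc _ ≤ (((k + 1)! * (n - 1) ^ k * n.choose 2 : ℕ) : ℝ) := by exact_mod_cast hchains
    _ = _ := by
      push_cast
      rw [Nat.cast_sub_one_eq_two_div_mul_choose_two]
      ring

open Classical in
/-- Let G₁,…,G_k be independent uniformly random 2-element subsets of
{1,…,n}.  The probability (counting measure on the finite sample space of k-tuples of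
2-element subsets) that they form a chain — each G_i with i > 0 intersects the union
of the previous ones — i.e. a circuit of depth k, is at most `(2/n)^{k−1} · k!`. -/
theorem stmt_7 (n k : ℕ) (hn : 2 ≤ n) (hk : 1 ≤ k) :
    (((Finset.univ : Finset (Fin k → {s : Finset (Fin n) // s.card = 2})).filter
        (fun G => ∀ i : Fin k, 0 < i.1 →
          ∃ j : Fin k, j < i ∧ ((G i).1 ∩ (G j).1).Nonempty)).card : ℝ) /
      ((Finset.univ : Finset (Fin k → {s : Finset (Fin n) // s.card = 2})).card : ℝ)
    ≤ (2/(n:ℝ))^(k-1) * (k.factorial) :=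
  stmt_7_general n k
end

section
/- Let G₁,…,G_m be independent uniformly random 2-element subsets of {1,…,n} with m = n/4, and let d = c·log n + 1. Then the probability that some subsequence of d of these gates forms a circuit of depth d is at most m·(2m/n)^{d−1} ≤ n^{1−c}. -/
/-!
If `i` gates form a circuit, each gate after the first adds at most one new point, so together
they cover at most `i + 1` points and the next gate of a circuit is one of at most
`(i + 1)(n - 1)` gates meeting them. Hence at most `C(n,2) · d! (n - 1)^(d-1)` of the
`C(n,2)^d` sequences of `d` gates are circuits, a fraction of at most `d! (2/n)^(d-1)`.
The other `m - d` gates being free, this is also the probability that a fixed subsequence of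
`m` random gates is a circuit, and a union bound over the `C(m,d) ≤ m^d / d!` subsequences
gives `m (2m/n)^(d-1)`. For `m = n/4` this is `m / 2^(d-1) ≤ n / n^c`, as
`2^(c ⌈log₂ n⌉) ≥ n^c`.
-/

open Finset Function
open scoped Nat

abbrev Gate (α : Type*) := {s : Finset α // #s = 2}

lemma card_gate {α : Type*} [Fintype α] : Fintype.card (Gate α) = (Fintype.card α).choose 2 := by
  simp [Fintype.card_finset_len]

section Circuits

variable {α : Type*} [DecidableEq α]

-- Meeting some earlier gate is the same as meeting the union of the earlier gates.
def IsCircuit {d : ℕ} (g : Fin d → Finset α) : Prop :=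
  ∀ i : Fin d, 0 < i.1 → ∃ j < i, (g i ∩ g j).Nonempty

instance {d : ℕ} (g : Fin d → Finset α) : Decidable (IsCircuit g) := by
  unfold IsCircuit; infer_instance

lemma biUnion_univ_fin_succ {k : ℕ} (g : Fin (k + 1) → Finset α) :
    univ.biUnion g = g (Fin.last k) ∪ univ.biUnion (Fin.init g) := by
  rw [Fin.univ_castSuccEmb, cons_eq_insert, biUnion_insert, map_eq_image, image_biUnion]
  rfl

namespace IsCircuit

lemma init {k : ℕ} {g : Fin (k + 1) → Finset α} (hg : IsCircuit g) :
    IsCircuit (Fin.init g) := by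
  intro i hi
  obtain ⟨j, hji, hj⟩ := hg i.castSucc hi
  have hjk : j.1 < k := lt_of_lt_of_le hji i.2.le
  refine ⟨j.castLT hjk, hji, ?_⟩
  simpa [Fin.init] using hj

lemma last_inter_nonempty {k : ℕ} {g : Fin (k + 2) → Finset α} (hg : IsCircuit g) :
    (g (Fin.last (k + 1)) ∩ univ.biUnion (Fin.init g)).Nonempty := by
  obtain ⟨j, hj, x, hx⟩ := hg (Fin.last (k + 1)) (by simp)
  rw [mem_inter] at hx
  refine ⟨x, mem_inter.2 ⟨hx.1, mem_biUnion.2 ⟨j.castLT hj, mem_univ _, ?_⟩⟩⟩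
  simpa [Fin.init] using hx.2

lemma card_biUnion_le {k : ℕ} {g : Fin (k + 1) → Finset α} (hg : IsCircuit g)
    (hcard : ∀ i, #(g i) ≤ 2) : #(univ.biUnion g) ≤ k + 2 := by
  induction k with
  | zero => simpa [biUnion_univ_fin_succ] using hcard 0
  | succ k ih =>
    have hU := ih hg.init fun i => hcard _
    have hmeet := card_pos.2 hg.last_inter_nonempty
    have hunion := card_union_add_card_inter (g (Fin.last (k + 1))) (univ.biUnion (Fin.init g))
    have hlast := hcard (Fin.last (k + 1))
    rw [biUnion_univ_fin_succ]
    omega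

end IsCircuit

variable [Fintype α]

lemma card_filter_inter_nonempty_le (U : Finset α) :
    #{s : Gate α | (s.1 ∩ U).Nonempty} ≤ #U * (Fintype.card α - 1) := by
  calc #{s : Gate α | (s.1 ∩ U).Nonempty}
      = #(({s : Gate α | (s.1 ∩ U).Nonempty} : Finset _).map (Embedding.subtype _)) :=
        (card_map _).symm
    _ ≤ #(U.biUnion fun a => (univ.erase a).image fun b => ({a, b} : Finset α)) := by
        refine card_le_card fun _ hmem => ?_
        obtain ⟨⟨s, hs2⟩, hs, rfl⟩ := mem_map.1 hmem
        obtain ⟨x, y, hxy, rfl⟩ := card_eq_two.1 hs2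
        obtain ⟨z, hz⟩ := (mem_filter.1 hs).2
        simp only [mem_inter, mem_insert, mem_singleton] at hz
        simp only [Embedding.coe_subtype, mem_biUnion, mem_image, mem_erase, mem_univ, and_true]
        rcases hz with ⟨rfl | rfl, hzU⟩
        · exact ⟨z, hzU, y, hxy.symm, rfl⟩
        · exact ⟨z, hzU, x, hxy, pair_comm _ _⟩
    _ ≤ #U * (Fintype.card α - 1) :=
        card_biUnion_le_card_mul _ _ _ fun a _ =>
          card_image_le.trans (by rw [card_erase_of_mem (mem_univ a), Finset.card_univ])

lemma card_circuits_le (k : ℕ) :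
    #{h : Fin (k + 1) → Gate α | IsCircuit fun i => (h i).1} ≤
      (Fintype.card α).choose 2 * ((k + 1)! * (Fintype.card α - 1) ^ k) := by
  induction k with
  | zero =>
    calc _ ≤ #(univ : Finset (Fin 1 → Gate α)) := card_filter_le _ _
      _ = _ := by simp [Fintype.card_finset_len]
  | succ k ih =>
    set C : Finset _ := {h : Fin (k + 1) → Gate α | IsCircuit fun i => (h i).1}
    let extensions (h' : Fin (k + 1) → Gate α) : Finset (Fin (k + 2) → Gate α) :=
      ({s : Gate α | (s.1 ∩ univ.biUnion fun i => (h' i).1).Nonempty} : Finset _).image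
        (Fin.snoc h')
    have hsub : ({h : Fin (k + 2) → Gate α | IsCircuit fun i => (h i).1} : Finset _) ⊆
        C.biUnion extensions := by
      intro h hh
      have hc : IsCircuit fun i => (h i).1 := (mem_filter.1 hh).2
      exact mem_biUnion.2 ⟨Fin.init h, mem_filter.2 ⟨mem_univ _, hc.init⟩, mem_image.2
        ⟨h (Fin.last _), mem_filter.2 ⟨mem_univ _, hc.last_inter_nonempty⟩, Fin.snoc_init_self h⟩⟩
    have hext : ∀ h' ∈ C, #(extensions h') ≤ (k + 2) * (Fintype.card α - 1) := fun h' hh' =>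
      card_image_le.trans <| (card_filter_inter_nonempty_le _).trans <| Nat.mul_le_mul_right _ <|
        (mem_filter.1 hh').2.card_biUnion_le fun i => (h' i).2.le
    calc _ ≤ #C * ((k + 2) * (Fintype.card α - 1)) :=
          (card_le_card hsub).trans (card_biUnion_le_card_mul _ _ _ hext)
      _ ≤ (Fintype.card α).choose 2 * ((k + 1)! * (Fintype.card α - 1) ^ k) *
            ((k + 2) * (Fintype.card α - 1)) := Nat.mul_le_mul_right _ ih
      _ = _ := by rw [Nat.factorial_succ (k + 1), pow_succ]; ring

end Circuits

lemma card_filter_comp_mul_le {ι κ γ : Type*} [Fintype ι] [Fintype κ] [Fintype γ]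
    [DecidableEq ι] [DecidableEq κ] {f : ι → κ} (hf : Injective f) (P : (ι → γ) → Prop)
    [DecidablePred P] :
    #{G : κ → γ | P (G ∘ f)} * Fintype.card γ ^ Fintype.card ι ≤
      #{h : ι → γ | P h} * Fintype.card γ ^ Fintype.card κ := by
  classical
  have hrest : #{G : κ → γ | P (G ∘ f)} ≤
      #{h : ι → γ | P h} * Fintype.card γ ^ (Fintype.card κ - Fintype.card ι) := by
    calc _ ≤ #(({h : ι → γ | P h} : Finset _) ×ˢ (univ : Finset ({x // x ∉ Set.range f} → γ))) := by
          refine card_le_card_of_injOn (fun G => (G ∘ f, fun x => G x))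
            (fun G hG => mem_product.2
              ⟨mem_filter.2 ⟨mem_univ _, (mem_filter.1 hG).2⟩, mem_univ _⟩) ?_
          intro G₁ _ G₂ _ h
          simp only [Prod.mk.injEq] at h
          funext x
          by_cases hx : x ∈ Set.range f
          · obtain ⟨i, rfl⟩ := hx
            exact congrFun h.1 i
          · exact congrFun h.2 ⟨x, hx⟩
      _ = _ := by
          rw [card_product, Finset.card_univ, Fintype.card_fun, Fintype.card_subtype_compl,
            ← Set.card_range_of_injective hf]
  calc _ ≤ #{h : ι → γ | P h} * Fintype.card γ ^ (Fintype.card κ - Fintype.card ι) *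
        Fintype.card γ ^ Fintype.card ι := Nat.mul_le_mul_right _ hrest
    _ = _ := by rw [mul_assoc, ← pow_add, Nat.sub_add_cancel (Fintype.card_le_of_injective f hf)]

open Classical in
lemma card_strictMono_le_choose (d m : ℕ) :
    #{f : Fin d → Fin m | StrictMono f} ≤ m.choose d := by
  calc _ ≤ #(powersetCard d (univ : Finset (Fin m))) := by
        refine card_le_card_of_injOn (fun f => univ.image f) (fun f hf => ?_)
          fun f hf g hg hfg => ?_
        · simp [card_image_of_injective _ (mem_filter.1 hf).2.injective]
        · refine ((mem_filter.1 hf).2.range_inj (mem_filter.1 hg).2).1 ?_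
          simpa using congrArg ((↑) : Finset (Fin m) → Set (Fin m)) hfg
    _ = m.choose d := by simp

section Probability

variable {α : Type*} [DecidableEq α] [Fintype α]

open Classical in
lemma card_filter_exists_circuit_mul_le (m k : ℕ) :
    #{G : Fin m → Gate α | ∃ f : Fin (k + 1) → Fin m, StrictMono f ∧
        IsCircuit fun i => (G (f i)).1} * (Fintype.card α).choose 2 ^ (k + 1) ≤
      m ^ (k + 1) * ((Fintype.card α).choose 2 * (Fintype.card α - 1) ^ k) *
        (Fintype.card α).choose 2 ^ m := by
  set N := (Fintype.card α).choose 2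
  set SM : Finset (Fin (k + 1) → Fin m) := {f | StrictMono f}
  have hunion : #{G : Fin m → Gate α | ∃ f : Fin (k + 1) → Fin m, StrictMono f ∧
      IsCircuit fun i => (G (f i)).1} ≤
        ∑ f ∈ SM, #{G : Fin m → Gate α | IsCircuit fun i => (G (f i)).1} := by
    refine (card_le_card fun G hG => ?_).trans card_biUnion_le
    obtain ⟨f, hf, hc⟩ := (mem_filter.1 hG).2
    exact mem_biUnion.2 ⟨f, mem_filter.2 ⟨mem_univ _, hf⟩, mem_filter.2 ⟨mem_univ _, hc⟩⟩
  calc _ ≤ ∑ f ∈ SM, #{G : Fin m → Gate α | IsCircuit fun i => (G (f i)).1} * N ^ (k + 1) := by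
        rw [← sum_mul]; exact Nat.mul_le_mul_right _ hunion
    _ ≤ ∑ f ∈ SM, #{h : Fin (k + 1) → Gate α | IsCircuit fun i => (h i).1} * N ^ m :=
        sum_le_sum fun f hf => by
          simpa [card_gate] using card_filter_comp_mul_le (mem_filter.1 hf).2.injective
            (fun h : Fin (k + 1) → Gate α => IsCircuit fun i => (h i).1)
    _ = #SM * #{h : Fin (k + 1) → Gate α | IsCircuit fun i => (h i).1} * N ^ m := by
        rw [sum_const, smul_eq_mul, mul_assoc]
    _ ≤ m.choose (k + 1) * (N * ((k + 1)! * (Fintype.card α - 1) ^ k)) * N ^ m := by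
        gcongr
        · exact card_strictMono_le_choose _ _
        · exact card_circuits_le k
    _ ≤ _ := by
        have hchoose := (Nat.descFactorial_eq_factorial_mul_choose m (k + 1)).symm.trans_le
          (Nat.descFactorial_le_pow m (k + 1))
        calc _ = m.choose (k + 1) * (k + 1)! * (N * (Fintype.card α - 1) ^ k) * N ^ m := by ring
          _ ≤ _ := by gcongr; linarith

open Classical in
lemma card_filter_exists_circuit_div_le (hα : 2 ≤ Fintype.card α) (m k : ℕ) :
    (#{G : Fin m → Gate α | ∃ f : Fin (k + 1) → Fin m, StrictMono f ∧
        IsCircuit fun i => (G (f i)).1} : ℝ) / #(univ : Finset (Fin m → Gate α)) ≤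
      m * (2 * m / Fintype.card α) ^ k := by
  have hcount := card_filter_exists_circuit_mul_le (α := α) m k
  set n := Fintype.card α
  have hN : ((n.choose 2 : ℕ) : ℝ) = n * (n - 1) / 2 := Nat.cast_choose_two ℝ n
  have hN0 : (0 : ℝ) < n.choose 2 := by exact_mod_cast Nat.choose_pos hα
  rw [← Nat.cast_le (α := ℝ)] at hcount
  push_cast [Nat.cast_pred (by omega : 0 < n)] at hcount
  rw [card_univ, Fintype.card_fun, card_gate, Fintype.card_fin, Nat.cast_pow,
    div_le_iff₀ (by positivity)]
  refine le_of_mul_le_mul_right (hcount.trans_eq ?_) (pow_pos hN0 (k + 1))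
  have hkey : 2 * m / n * (n.choose 2 : ℝ) = m * (n - 1) := by
    rw [hN]
    field_simp
  calc _ = m * (m * (n - 1) : ℝ) ^ k * (n.choose 2) * (n.choose 2) ^ m := by
        rw [mul_pow]; ring
    _ = _ := by rw [← hkey]; ring

end Probability

lemma mul_half_pow_clog_le {n m : ℕ} (c : ℕ) (hn : 0 < n) (hm : m ≤ n) :
    (m : ℝ) * (1 / 2) ^ (c * Nat.clog 2 n) ≤ (n : ℝ) ^ ((1 : ℝ) - c) := by
  rw [Real.rpow_sub (by positivity), Real.rpow_one, Real.rpow_natCast, one_div, inv_pow,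
    ← div_eq_mul_inv, div_le_div_iff₀ (by positivity) (by positivity)]
  have hpow : n ^ c ≤ 2 ^ (c * Nat.clog 2 n) := by
    rw [mul_comm, pow_mul]
    exact Nat.pow_le_pow_left (Nat.le_pow_clog one_lt_two n) c
  exact_mod_cast Nat.mul_le_mul hm hpow

open Classical in
theorem stmt_8_general (n m c : ℕ) (hm : n = 4 * m) (hn : 2 ≤ n) :
    (((Finset.univ : Finset (Fin m → {s : Finset (Fin n) // s.card = 2})).filter
        (fun G => ∃ f : Fin (c * Nat.clog 2 n + 1) → Fin m, StrictMono f ∧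
          ∀ i : Fin (c * Nat.clog 2 n + 1), 0 < i.1 →
            ∃ j : Fin (c * Nat.clog 2 n + 1), j < i ∧
              ((G (f i)).1 ∩ (G (f j)).1).Nonempty)).card : ℝ) /
      ((Finset.univ : Finset (Fin m → {s : Finset (Fin n) // s.card = 2})).card : ℝ)
    ≤ (m : ℝ) * (2*(m:ℝ)/(n:ℝ))^(c * Nat.clog 2 n + 1 - 1) ∧
    (m : ℝ) * (2*(m:ℝ)/(n:ℝ))^(c * Nat.clog 2 n + 1 - 1) ≤ (n:ℝ)^((1:ℝ) - (c:ℝ)) := by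
  have hratio : 2 * (m : ℝ) / n = 1 / 2 := by
    rw [hm, Nat.cast_mul, div_eq_iff (by norm_cast; omega)]
    ring
  rw [Nat.add_sub_cancel]
  refine ⟨?_, hratio ▸ mul_half_pow_clog_le c (by omega) (by omega)⟩
  convert card_filter_exists_circuit_div_le (α := Fin n) (by simpa using hn) m (c * Nat.clog 2 n)
    using 3
  · -- the two filters differ only in their decidability instances
    congr 1
  · simp

open Classical in
/-- Let G₁,…,G_m be independent uniformly random 2-element subsets of
{1,…,n} with m = n/4, and let d = c·log n + 1 (with `Nat.clog 2` the ceiling base-2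
logarithm).  Then the probability that some subsequence of d of these gates forms a
circuit of depth d is at most `m·(2m/n)^{d−1}`, which is at most `n^{1−c}`. -/
theorem stmt_8 (n m c : ℕ) (hm : n = 4 * m) (hn : 2 ≤ n) (hc : 1 ≤ c) :
    (((Finset.univ : Finset (Fin m → {s : Finset (Fin n) // s.card = 2})).filter
        (fun G => ∃ f : Fin (c * Nat.clog 2 n + 1) → Fin m, StrictMono f ∧
          ∀ i : Fin (c * Nat.clog 2 n + 1), 0 < i.1 →
            ∃ j : Fin (c * Nat.clog 2 n + 1), j < i ∧
              ((G (f i)).1 ∩ (G (f j)).1).Nonempty)).card : ℝ) /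
      ((Finset.univ : Finset (Fin m → {s : Finset (Fin n) // s.card = 2})).card : ℝ)
    ≤ (m : ℝ) * (2*(m:ℝ)/(n:ℝ))^(c * Nat.clog 2 n + 1 - 1) ∧
    (m : ℝ) * (2*(m:ℝ)/(n:ℝ))^(c * Nat.clog 2 n + 1 - 1) ≤ (n:ℝ)^((1:ℝ) - (c:ℝ)) :=
  stmt_8_general n m c hm hn
end

section
/- Consider the birth-death Markov chain on {1,…,n} with transition probabilities P(x,x−1) = 2x(x−1)/(5n(n−1)), P(x,x+1) = 6x(n−x)/(5n(n−1)), and P(x,x) = 1 − 2x(3n−2x−1)/(5n(n−1)). Then the distribution π(k) = 3^k·C(n,k)/(4^n − 1) is stationary for this chain. -/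
/-!
The chain is a birth-death chain, so it suffices to check detailed balance
`π(x) P(x, x+1) = π(x+1) P(x+1, x)`; for `π(x) ∝ 3^x C(n, x)` this is the identity
`C(n, x) (n - x) = C(n, x+1) (x+1)`. Since each row of `P` sums to one, the column sum
`∑ₓ π(x) P(x, y)` over the three neighbours of `y` then collapses to `π(y)`.
-/

/-- The transition matrix of the birth-death chain on {1,…,n}:
`P(x,x+1) = 6x(n−x)/(5n(n−1))`, `P(x,x−1) = 2x(x−1)/(5n(n−1))`,
`P(x,x) = 1 − 2x(3n−2x−1)/(5n(n−1))`, and 0 otherwise. -/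
noncomputable def Pmat (n : ℕ) (x y : ℕ) : ℝ :=
  if y = x + 1 then 6*(x:ℝ)*((n:ℝ)-(x:ℝ))/(5*(n:ℝ)*((n:ℝ)-1))
  else if y + 1 = x then 2*(x:ℝ)*((x:ℝ)-1)/(5*(n:ℝ)*((n:ℝ)-1))
  else if y = x then 1 - 2*(x:ℝ)*(3*(n:ℝ)-2*(x:ℝ)-1)/(5*(n:ℝ)*((n:ℝ)-1))
  else 0

open Finset

theorem Finset.sum_Icc_one_eq_of_support {M : Type*} [AddCommMonoid M] {f : ℕ → M} {m n : ℕ}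
    (hmn : m + 1 ≤ n) (hf : ∀ x, x ≠ m → x ≠ m + 1 → x ≠ m + 2 → f x = 0)
    (hf0 : f 0 = 0) (hfn : f (n + 1) = 0) :
    ∑ x ∈ Icc 1 n, f x = f m + f (m + 1) + f (m + 2) := by
  have hIcc : ∑ x ∈ Icc 1 n, f x = ∑ x ∈ range (n + 2), f x := by
    refine sum_subset (fun x hx ↦ by simp at hx ⊢; omega) fun x hx hx' ↦ ?_
    obtain rfl | rfl : x = 0 ∨ x = n + 1 := by simp at hx hx'; omega
    exacts [hf0, hfn]
  have hrange : ∑ x ∈ {m, m + 1, m + 2}, f x = ∑ x ∈ range (n + 2), f x :=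
    sum_subset (fun x hx ↦ by simp at hx ⊢; omega) fun x _ hx ↦ by
      simp only [mem_insert, mem_singleton, not_or] at hx
      exact hf x hx.1 hx.2.1 hx.2.2
  rw [hIcc, ← hrange, sum_insert (by simp), sum_pair (by omega), add_assoc]

theorem Nat.cast_choose_succ_mul {R : Type*} [CommRing R] (n k : ℕ) :
    (n.choose (k + 1) : R) * (k + 1) = n.choose k * (n - k) := by
  rcases le_or_gt k n with hk | hk
  · rw [← Nat.cast_sub hk]
    exact_mod_cast congrArg (Nat.cast : ℕ → R) (Nat.choose_succ_right_eq n k)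
  · simp [Nat.choose_eq_zero_of_lt hk, Nat.choose_eq_zero_of_lt (Nat.lt_succ_of_lt hk)]

section BirthDeathChain

variable (n : ℕ)

theorem Pmat_self_succ (x : ℕ) :
    Pmat n x (x + 1) = 6 * x * (n - x) / (5 * n * (n - 1)) := by
  simp [Pmat]

theorem Pmat_succ_self (x : ℕ) :
    Pmat n (x + 1) x = 2 * (x + 1) * x / (5 * n * (n - 1)) := by
  rw [Pmat, if_neg (by omega), if_pos rfl]
  push_cast
  ring

theorem Pmat_self (x : ℕ) :
    Pmat n x x = 1 - 2 * x * (3 * n - 2 * x - 1) / (5 * n * (n - 1)) := by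
  simp [Pmat]

theorem Pmat_of_not_adjacent {x y : ℕ} (h₁ : y ≠ x + 1) (h₂ : y + 1 ≠ x) (h₃ : y ≠ x) :
    Pmat n x y = 0 := by
  simp [Pmat, h₁, h₂, h₃]

theorem Pmat_row_sum (x : ℕ) :
    Pmat n (x + 1) x + Pmat n (x + 1) (x + 1) + Pmat n (x + 1) (x + 2) = 1 := by
  rw [Pmat_succ_self, Pmat_self, Pmat_self_succ]
  push_cast
  ring

noncomputable def stationaryDist (k : ℕ) : ℝ := 3 ^ k * n.choose k / (4 ^ n - 1)

theorem stationaryDist_mul_Pmat_succ (x : ℕ) :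
    stationaryDist n x * Pmat n x (x + 1) = stationaryDist n (x + 1) * Pmat n (x + 1) x := by
  rw [Pmat_self_succ, Pmat_succ_self, stationaryDist, stationaryDist]
  linear_combination (-6 * 3 ^ x * x / (4 ^ n - 1) / (5 * n * (n - 1)) : ℝ) *
    Nat.cast_choose_succ_mul (R := ℝ) n x

end BirthDeathChain

theorem stmt_9_general (n : ℕ) :
    ∀ y ∈ Finset.Icc 1 n,
      ∑ x ∈ Finset.Icc 1 n, ((3:ℝ)^x * (n.choose x) / ((4:ℝ)^n - 1)) * Pmat n x y
        = (3:ℝ)^y * (n.choose y) / ((4:ℝ)^n - 1) := by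
  intro y hy
  obtain ⟨m, rfl⟩ : ∃ m, y = m + 1 := ⟨y - 1, by simp at hy; omega⟩
  change ∑ x ∈ Icc 1 n, stationaryDist n x * Pmat n x (m + 1) = stationaryDist n (m + 1)
  have hsupp : ∀ x, x ≠ m → x ≠ m + 1 → x ≠ m + 2 →
      stationaryDist n x * Pmat n x (m + 1) = 0 := fun x h₁ h₂ h₃ ↦ by
    rw [Pmat_of_not_adjacent n (by omega) (by omega) (by omega), mul_zero]
  have hleft : stationaryDist n 0 * Pmat n 0 (m + 1) = 0 := by simp [Pmat]
  have hright : stationaryDist n (n + 1) = 0 := by simp [stationaryDist]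
  rw [sum_Icc_one_eq_of_support (mem_Icc.mp hy).2 hsupp hleft (by rw [hright, zero_mul])]
  linear_combination stationaryDist_mul_Pmat_succ n m - stationaryDist_mul_Pmat_succ n (m + 1) +
    stationaryDist n (m + 1) * Pmat_row_sum n m

/-- The distribution `π(k) = 3^k·C(n,k)/(4^n − 1)` is stationary for the
birth-death Markov chain on {1,…,n} with the transition probabilities `Pmat`. -/
theorem stmt_9 (n : ℕ) (hn : 1 ≤ n) :
    ∀ y ∈ Finset.Icc 1 n,
      ∑ x ∈ Finset.Icc 1 n, ((3:ℝ)^x * (n.choose x) / ((4:ℝ)^n - 1)) * Pmat n x y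
        = (3:ℝ)^y * (n.choose y) / ((4:ℝ)^n - 1) :=
  stmt_9_general n
end

section
/- Let M = min over the walk's trajectory (before hitting n/2) of a birth-death chain on {1,…,n} started at ℓ ≤ n/2, where from any state the probability of moving down is at most (conditional odds) such that the probability of first reaching m−1 before n/2 from m is at most (1/2)·(m−1)/(n−m). Then Pr[M ≤ m] ≤ (1/(2^ℓ C(n,ℓ)))·(2n)^m for all 1 ≤ m ≤ ℓ. -/
lemma aux_stmt13 (n m : ℕ) (hm : 1 ≤ m) :
    ∀ ℓ, m ≤ ℓ → 2*ℓ ≤ n →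
      ∏ j ∈ Finset.Icc (m+1) ℓ, ((1/2 : ℝ) * ((j:ℝ)-1)/((n:ℝ)-(j:ℝ)))
        ≤ (2*(n:ℝ))^m / ((2:ℝ)^ℓ * (n.choose ℓ)) := by
  intro ℓ hml
  induction ℓ, hml using Nat.le_induction with
  | base =>
    intro h2m
    rw [Finset.Icc_eq_empty (by omega), Finset.prod_empty]
    have hmn : m ≤ n := by omega
    have hC : (0:ℝ) < (n.choose m : ℝ) := by
      exact_mod_cast Nat.choose_pos hmn
    rw [le_div_iff₀ (by positivity), one_mul]
    have h1 : (n.choose m : ℝ) ≤ (n:ℝ)^m := by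
      exact_mod_cast Nat.choose_le_pow n m
    calc (2:ℝ)^m * (n.choose m : ℝ) ≤ (2:ℝ)^m * (n:ℝ)^m := by
          exact mul_le_mul_of_nonneg_left h1 (by positivity)
      _ = (2*(n:ℝ))^m := by rw [mul_pow]
  | succ ℓ hml ih =>
    intro h2l
    have ih' := ih (by omega)
    have hln : ℓ + 1 ≤ n := by omega
    have hC : (0:ℝ) < (n.choose ℓ : ℝ) := by
      exact_mod_cast Nat.choose_pos (by omega : ℓ ≤ n)
    have hC' : (0:ℝ) < (n.choose (ℓ+1) : ℝ) := by
      exact_mod_cast Nat.choose_pos hln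
    have hNL : (0:ℝ) < (n:ℝ) - ((ℓ:ℝ)+1) := by
      have : (ℓ:ℝ) + 1 + 1 ≤ (n:ℝ) := by exact_mod_cast (by omega : ℓ + 2 ≤ n)
      linarith
    have hkey : (n.choose (ℓ+1) : ℝ) * ((ℓ:ℝ)+1) = (n.choose ℓ : ℝ) * ((n:ℝ) - (ℓ:ℝ)) := by
      have := Nat.choose_succ_right_eq n ℓ
      have h' : ((n.choose (ℓ+1) * (ℓ+1) : ℕ) : ℝ) = ((n.choose ℓ * (n - ℓ) : ℕ) : ℝ) := by
        exact_mod_cast congrArg (Nat.cast (R := ℝ)) this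
      push_cast [Nat.cast_sub (by omega : ℓ ≤ n)] at h'
      linarith [h']
    rw [Finset.prod_Icc_succ_top (by omega : m + 1 ≤ ℓ + 1)]
    have hterm0 : (0:ℝ) ≤ (1/2 : ℝ) * (((ℓ+1:ℕ):ℝ)-1)/((n:ℝ)-((ℓ+1:ℕ):ℝ)) := by
      push_cast
      have hl0 : (0:ℝ) ≤ (ℓ:ℝ) := by positivity
      have : (0:ℝ) ≤ (1/2:ℝ) * (ℓ:ℝ) := by positivity
      calc (0:ℝ) ≤ ((1/2:ℝ) * (ℓ:ℝ)) / ((n:ℝ) - ((ℓ:ℝ)+1)) := by positivity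
        _ = (1/2:ℝ) * ((ℓ:ℝ)+1-1)/((n:ℝ)-((ℓ:ℝ)+1)) := by ring_nf
    have hprod0 : (0:ℝ) ≤ ∏ j ∈ Finset.Icc (m+1) ℓ, ((1/2 : ℝ) * ((j:ℝ)-1)/((n:ℝ)-(j:ℝ))) := by
      apply Finset.prod_nonneg
      intro j hj
      simp only [Finset.mem_Icc] at hj
      have hj1 : (1:ℝ) ≤ (j:ℝ) := by exact_mod_cast (by omega : 1 ≤ j)
      have hjn : (j:ℝ) < (n:ℝ) := by exact_mod_cast (by omega : j < n)
      have : (0:ℝ) < (n:ℝ) - (j:ℝ) := by linarith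
      apply div_nonneg
      · nlinarith
      · linarith
    calc (∏ j ∈ Finset.Icc (m+1) ℓ, ((1/2 : ℝ) * ((j:ℝ)-1)/((n:ℝ)-(j:ℝ)))) *
          ((1/2 : ℝ) * (((ℓ+1:ℕ):ℝ)-1)/((n:ℝ)-((ℓ+1:ℕ):ℝ)))
        ≤ ((2*(n:ℝ))^m / ((2:ℝ)^ℓ * (n.choose ℓ))) *
          ((1/2 : ℝ) * (((ℓ+1:ℕ):ℝ)-1)/((n:ℝ)-((ℓ+1:ℕ):ℝ))) := by
          exact mul_le_mul_of_nonneg_right ih' hterm0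
      _ ≤ (2*(n:ℝ))^m / ((2:ℝ)^(ℓ+1) * (n.choose (ℓ+1))) := by
          push_cast
          rw [div_mul_div_comm, div_le_div_iff₀ (by positivity)
            (by positivity)]
          have hm0 : (0:ℝ) ≤ (2*(n:ℝ))^m := by positivity
          have hstep : ((ℓ:ℝ)+1-1) * ((2:ℝ)^(ℓ+1) * (n.choose (ℓ+1) : ℝ))
              ≤ (2:ℝ)^ℓ * (n.choose ℓ : ℝ) * (2 * ((n:ℝ) - ((ℓ:ℝ)+1))) := by
            have h2l' : (2:ℝ)*(ℓ:ℝ) + 2 ≤ (n:ℝ) := by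
              exact_mod_cast (by omega : 2*ℓ + 2 ≤ n)
            have hp : (0:ℝ) < (2:ℝ)^ℓ := by positivity
            have key2 : ((ℓ:ℝ)) * ((n.choose (ℓ+1) : ℝ) * ((ℓ:ℝ)+1))
                ≤ (((n.choose ℓ : ℝ)) * (((n:ℝ)) - ((ℓ:ℝ)+1))) * ((ℓ:ℝ)+1) := by
              rw [hkey]
              nlinarith [hC.le]
            have hl1 : (0:ℝ) < (ℓ:ℝ) + 1 := by positivity
            have : ((ℓ:ℝ)) * (n.choose (ℓ+1) : ℝ)
                ≤ (n.choose ℓ : ℝ) * ((n:ℝ) - ((ℓ:ℝ)+1)) := by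
              nlinarith
            calc ((ℓ:ℝ)+1-1) * ((2:ℝ)^(ℓ+1) * (n.choose (ℓ+1) : ℝ))
                = ((ℓ:ℝ) * (n.choose (ℓ+1) : ℝ)) * (2 * (2:ℝ)^ℓ) := by ring
              _ ≤ ((n.choose ℓ : ℝ) * ((n:ℝ) - ((ℓ:ℝ)+1))) * (2 * (2:ℝ)^ℓ) := by
                  exact mul_le_mul_of_nonneg_right this (by positivity)
              _ = (2:ℝ)^ℓ * (n.choose ℓ : ℝ) * (2 * ((n:ℝ) - ((ℓ:ℝ)+1))) := by ring
          calc (2*(n:ℝ))^m * ((1/2:ℝ) * ((ℓ:ℝ)+1-1)) * ((2:ℝ)^(ℓ+1) * (n.choose (ℓ+1) : ℝ))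
              = (2*(n:ℝ))^m * ((1/2) * (((ℓ:ℝ)+1-1) * ((2:ℝ)^(ℓ+1) * (n.choose (ℓ+1) : ℝ)))) := by
                ring
            _ ≤ (2*(n:ℝ))^m * ((1/2) * ((2:ℝ)^ℓ * (n.choose ℓ : ℝ) * (2 * ((n:ℝ) - ((ℓ:ℝ)+1))))) := by
                apply mul_le_mul_of_nonneg_left _ hm0
                apply mul_le_mul_of_nonneg_left hstep (by norm_num)
            _ = (2*(n:ℝ))^m * ((2:ℝ)^ℓ * (n.choose ℓ : ℝ) * (((n:ℝ)) - ((ℓ:ℝ)+1))) := by ring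

/-- Let M be the minimum of the trajectory (before hitting n/2) of the
accelerated weight chain on {1,…,n} started at ℓ ≤ n/2.  By the strong Markov
property `Pr[M ≤ m] = ∏_{j=m+1}^{ℓ} r j`, where `r j` is the probability of first
reaching j−1 before n/2 from j, and each `r j` is at most `(1/2)·(j−1)/(n−j)`.  Then
`Pr[M ≤ m] ≤ (1/(2^ℓ C(n,ℓ)))·(2n)^m` for all `1 ≤ m ≤ ℓ`. -/
theorem stmt_13 (n m ℓ : ℕ) (hm : 1 ≤ m) (hml : m ≤ ℓ) (hl : 2*ℓ ≤ n)
    (r : ℕ → ℝ)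
    (hr0 : ∀ j ∈ Finset.Icc (m+1) ℓ, 0 ≤ r j)
    (hr : ∀ j ∈ Finset.Icc (m+1) ℓ, r j ≤ (1/2) * ((j:ℝ)-1)/((n:ℝ)-(j:ℝ))) :
    ∏ j ∈ Finset.Icc (m+1) ℓ, r j ≤ (2*(n:ℝ))^m / ((2:ℝ)^ℓ * (n.choose ℓ)) := by
  calc ∏ j ∈ Finset.Icc (m+1) ℓ, r j
      ≤ ∏ j ∈ Finset.Icc (m+1) ℓ, ((1/2 : ℝ) * ((j:ℝ)-1)/((n:ℝ)-(j:ℝ))) :=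
        Finset.prod_le_prod hr0 hr
    _ ≤ _ := aux_stmt13 n m hm ℓ hml hl
end

section
/- Let G_{k,i} be independent geometric random variables where G_{k,i} counts failures before success with success probability 2k/(5n). Then for λ with e^λ = 1/(1 − m/(5n)), E[exp(λ(Σ_{i=1}^{γm/μ} G_{m,i} + Σ_{i=1}^{γ/μ} Σ_{k=m+1}^{n/2} G_{k,i}))] ≤ 2^{γm/μ}·exp((γ/μ)·(m/2)·ln n). -/
/-!
Summing the geometric series, `geomMGF p λ = p / (1 - (1 - p) e^λ)`; for `e^λ = 1/(1 - m/(5n))`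
and `p = 2k/(5n)` this is at most `2k/(2k - m)`, which is `2` at `k = m`. Instead of the
harmonic-sum estimate, bound the squares: `(2k/(2k - m))² ≤ k/(k - m)` and
`∏_{k=m+1}^{N} k/(k - m) = N.choose m ≤ N^m`, so the `2γ`-th powers of the factors with
`k > m` contribute at most `(n/2)^(γm) ≤ n^(γm) = exp(2γ · (m/2) · ln n)`.
-/

/-- The moment generating function `E[e^{λG}] = Σ_j (1−p)^j p e^{λj}` of a geometric
random variable G with success probability p (counting failures before success). -/
noncomputable def geomMGF (p lam : ℝ) : ℝ :=
  ∑' j : ℕ, (1 - p)^j * p * Real.exp (lam * j)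

open Finset Real

lemma geomMGF_nonneg {p : ℝ} (hp0 : 0 ≤ p) (hp1 : p ≤ 1) (lam : ℝ) : 0 ≤ geomMGF p lam :=
  tsum_nonneg fun j => by
    have : 0 ≤ 1 - p := by linarith
    positivity

lemma geomMGF_eq {p lam : ℝ} (hp : p ≤ 1) (hlam : (1 - p) * exp lam < 1) :
    geomMGF p lam = p / (1 - (1 - p) * exp lam) := by
  have hr : 0 ≤ (1 - p) * exp lam := mul_nonneg (by linarith) (exp_pos lam).le
  have hterm : ∀ j : ℕ, (1 - p)^j * p * exp (lam * j) = ((1 - p) * exp lam)^j * p := by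
    intro j
    rw [mul_comm lam, exp_nat_mul, mul_pow]
    ring
  simp_rw [geomMGF, hterm, tsum_mul_right, tsum_geometric_of_lt_one hr hlam, div_eq_inv_mul]

lemma geomMGF_log_inv_one_sub_le {a p : ℝ} (ha : 0 ≤ a) (hap : a < p) (hp : p ≤ 1) :
    geomMGF p (log (1 / (1 - a))) ≤ p / (p - a) := by
  have h1a : 0 < 1 - a := by linarith
  have hexp : exp (log (1 / (1 - a))) = 1 / (1 - a) := exp_log (by positivity)
  have hlam : (1 - p) * (1 / (1 - a)) < 1 := by
    rw [mul_one_div, div_lt_one h1a]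
    linarith
  rw [geomMGF_eq hp (by rwa [hexp]), hexp,
    show 1 - (1 - p) * (1 / (1 - a)) = (p - a) / (1 - a) by field_simp; ring, div_div_eq_mul_div]
  gcongr
  exact mul_le_of_le_one_right (by linarith) (by linarith)

lemma geomMGF_two_mul_div_le {m k n : ℝ} (hm : 0 ≤ m) (hmk : m < 2 * k) (hkn : 2 * k ≤ 5 * n) :
    geomMGF (2 * k / (5 * n)) (log (1 / (1 - m / (5 * n)))) ≤ 2 * k / (2 * k - m) := by
  have hn : 0 < 5 * n := by linarith
  calc geomMGF (2 * k / (5 * n)) (log (1 / (1 - m / (5 * n))))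
      ≤ 2 * k / (5 * n) / (2 * k / (5 * n) - m / (5 * n)) :=
        geomMGF_log_inv_one_sub_le (by positivity) (by gcongr) ((div_le_one hn).2 hkn)
    _ = 2 * k / (2 * k - m) := by
        rw [← sub_div, div_div_div_cancel_right₀ hn.ne']

lemma prod_Icc_div_sub_eq_choose {m N : ℕ} (h : m ≤ N) :
    ∏ k ∈ Icc (m + 1) N, ((k : ℝ) / (k - m)) = N.choose m := by
  induction N, h using Nat.le_induction with
  | base => simp
  | succ N hN ih =>
    rw [prod_Icc_succ_top (by omega), ih]
    have hpos : (0 : ℝ) < N + 1 - m := by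
      have : (m : ℝ) ≤ N := by exact_mod_cast hN
      linarith
    have hc : (N.choose m : ℝ) * (N + 1) = (N + 1).choose m * (N + 1 - m) := by
      have := congrArg (Nat.cast (R := ℝ)) (Nat.choose_mul_succ_eq N m)
      push_cast [Nat.cast_sub (show m ≤ N + 1 by omega)] at this
      exact this
    push_cast
    rw [mul_div_assoc', div_eq_iff hpos.ne', hc]

lemma sq_two_mul_div_two_mul_sub_le {m k : ℝ} (hm : 0 ≤ m) (hmk : m < k) :
    (2 * k / (2 * k - m))^2 ≤ k / (k - m) := by
  rw [div_pow, div_le_div_iff₀ (by nlinarith) (by linarith)]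
  nlinarith [sq_nonneg m, mul_nonneg hm (by linarith : 0 ≤ k)]

lemma sq_prod_Icc_two_mul_div_le_pow {m N : ℕ} (h : m ≤ N) :
    (∏ k ∈ Icc (m + 1) N, (2 * (k : ℝ) / (2 * k - m)))^2 ≤ (N : ℝ)^m := by
  rw [← prod_pow]
  calc ∏ k ∈ Icc (m + 1) N, (2 * (k : ℝ) / (2 * k - m))^2
      ≤ ∏ k ∈ Icc (m + 1) N, ((k : ℝ) / (k - m)) := by
        refine prod_le_prod (fun _ _ => sq_nonneg _) fun k hk => ?_
        have hmk : (m : ℝ) < k := by exact_mod_cast (mem_Icc.1 hk).1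
        exact sq_two_mul_div_two_mul_sub_le m.cast_nonneg hmk
    _ = N.choose m := prod_Icc_div_sub_eq_choose h
    _ ≤ (N : ℝ)^m := by exact_mod_cast Nat.choose_le_pow N m

lemma geomMGF_nat_nonneg {k n : ℕ} (hkn : 2 * k ≤ 5 * n) (lam : ℝ) :
    0 ≤ geomMGF (2 * (k : ℝ) / (5 * n)) lam :=
  geomMGF_nonneg (by positivity) (div_le_one_of_le₀ (by exact_mod_cast hkn) (by positivity)) lam

lemma geomMGF_nat_le {m k n : ℕ} (hmk : m < 2 * k) (hkn : 2 * k ≤ 5 * n) :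
    geomMGF (2 * (k : ℝ) / (5 * n)) (log (1 / (1 - m / (5 * n)))) ≤ 2 * k / (2 * k - m) :=
  geomMGF_two_mul_div_le m.cast_nonneg (by exact_mod_cast hmk) (by exact_mod_cast hkn)

lemma prod_Icc_geomMGF_pow_le {m n : ℕ} (γ : ℕ) (hmn : 2 * m ≤ n) :
    ∏ k ∈ Icc (m + 1) (n / 2),
      geomMGF (2 * (k : ℝ) / (5 * n)) (log (1 / (1 - m / (5 * n))))^(2 * γ) ≤ (n : ℝ)^(γ * m) :=
  calc _ ≤ ∏ k ∈ Icc (m + 1) (n / 2), (2 * (k : ℝ) / (2 * k - m))^(2 * γ) := by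
        refine prod_le_prod (fun k hk => pow_nonneg (geomMGF_nat_nonneg (by grind) _) _)
          fun k hk => pow_le_pow_left₀ (geomMGF_nat_nonneg (by grind) _)
            (geomMGF_nat_le (by grind) (by grind)) _
    _ = ((∏ k ∈ Icc (m + 1) (n / 2), (2 * (k : ℝ) / (2 * k - m)))^2)^γ := by
        rw [prod_pow, pow_mul]
    _ ≤ (((n / 2 : ℕ) : ℝ)^m)^γ := by
        gcongr
        exact sq_prod_Icc_two_mul_div_le_pow (by omega)
    _ ≤ (n : ℝ)^(γ * m) := by
        rw [← pow_mul, mul_comm m]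
        gcongr
        exact_mod_cast Nat.div_le_self n 2

/-- Let `G_{k,i}` be independent geometric random variables counting
failures before success with success probability `2k/(5n)`.  By independence, the
expectation `E[exp(λ(Σ_{i=1}^{γm/μ} G_{m,i} + Σ_{i=1}^{γ/μ} Σ_{k=m+1}^{n/2} G_{k,i}))]`
(with μ = 1/2, so the outer multiplicities are 2γm and 2γ) is the corresponding
product of geometric moment generating functions; for λ with
`e^λ = 1/(1 − m/(5n))` it is at most `2^{γm/μ}·exp((γ/μ)·(m/2)·ln n)`. -/
theorem stmt_15 (n m γ : ℕ) (hm : 1 ≤ m) (hmn : 2*m ≤ n) :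
    (geomMGF (2*(m:ℝ)/(5*(n:ℝ))) (Real.log (1/(1 - (m:ℝ)/(5*(n:ℝ))))))^(2*γ*m) *
      ∏ k ∈ Finset.Icc (m+1) (n/2),
        (geomMGF (2*(k:ℝ)/(5*(n:ℝ))) (Real.log (1/(1 - (m:ℝ)/(5*(n:ℝ))))))^(2*γ)
    ≤ (2:ℝ)^(2*γ*m) * Real.exp ((2*(γ:ℝ)) * ((m:ℝ)/2) * Real.log n) := by
  have hfirst : geomMGF (2 * (m : ℝ) / (5 * n)) (log (1 / (1 - m / (5 * n)))) ≤ 2 := by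
    have := geomMGF_nat_le (m := m) (k := m) (n := n) (by omega) (by omega)
    rwa [show 2 * (m : ℝ) / (2 * m - m) = 2 by field_simp; ring] at this
  have hexp : exp (2 * (γ : ℝ) * (m / 2) * log n) = (n : ℝ)^(γ * m) := by
    rw [show 2 * (γ : ℝ) * (m / 2) * log n = ((γ * m : ℕ) : ℝ) * log n by push_cast; ring,
      exp_nat_mul, exp_log (by exact_mod_cast (show 0 < n by omega))]
  rw [hexp]
  exact mul_le_mul (pow_le_pow_left₀ (geomMGF_nat_nonneg (by omega) _) hfirst _)
    (prod_Icc_geomMGF_pow_le γ hmn)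
    (prod_nonneg fun k hk => pow_nonneg (geomMGF_nat_nonneg (by grind) _) _) (by positivity)
end

section
/- For integers ℓ/2 ≤ p ≤ min(ℓ, m) with m/n ≤ 1/9 and ℓ ≤ n, one has 3^p·C(m,p)·C(n−m,ℓ−p) ≤ 3^ℓ·2^ℓ·(m/n)^{ℓ/2}·C(n,ℓ); in particular Σ_{p=⌈ℓ/2⌉}^{min(ℓ,m)} C(m,p)·3^ℓ·C(n−m,ℓ−p) ≤ (ℓ/2+1)·3^ℓ·2^ℓ·(1/3)^ℓ·C(n,ℓ) = (ℓ/2+1)·2^ℓ·C(n,ℓ). -/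
/-!
Writing binomial coefficients as falling factorials, `C(m,p) C(n-m,ℓ-p) p! (ℓ-p)!` is
`m^{(p)} (n-m)^{(ℓ-p)}`. Comparing factor by factor, `m^{(p)} ≤ (m/n)^p n^{(p)}` and, as `p ≤ m`,
`(n-m)^{(ℓ-p)} ≤ (n-p)^{(ℓ-p)}`; the product of the right-hand sides is `n^{(ℓ)} = C(n,ℓ) ℓ!`, and
`ℓ! ≤ 2^ℓ p! (ℓ-p)!`. Hence `C(m,p) C(n-m,ℓ-p) ≤ 2^ℓ (m/n)^p C(n,ℓ)`. Since `p ≥ ℓ/2` and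
`m/n ≤ 1/9`, the factor `(m/n)^p` is at most `(m/n)^{ℓ/2}`, and also at most `3^{-ℓ}`, which
cancels the `3^ℓ` in each term of the sum; the sum has at most `ℓ/2 + 1` terms.
-/

open Finset

namespace Nat

theorem pow_mul_descFactorial_le_pow_mul_descFactorial {m n : ℕ} (h : m ≤ n) (k : ℕ) :
    n ^ k * m.descFactorial k ≤ m ^ k * n.descFactorial k := by
  simp only [descFactorial_eq_prod_range, pow_eq_prod_const, ← prod_mul_distrib]
  refine prod_le_prod (fun _ _ => Nat.zero_le _) fun i _ => ?_
  rw [Nat.mul_sub, Nat.mul_sub, Nat.mul_comm n m]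
  exact Nat.sub_le_sub_left (Nat.mul_le_mul_right i h) _

theorem factorial_le_two_pow_mul_factorial_mul_factorial {p ℓ : ℕ} (h : p ≤ ℓ) :
    ℓ ! ≤ 2 ^ ℓ * (p ! * (ℓ - p)!) := by
  rw [← choose_mul_factorial_mul_factorial h, Nat.mul_assoc]
  exact Nat.mul_le_mul_right _ (choose_le_two_pow ℓ p)

theorem pow_mul_choose_mul_choose_le {n m ℓ p : ℕ} (hmn : m ≤ n) (hpm : p ≤ m) (hpℓ : p ≤ ℓ) :
    n ^ p * (m.choose p * (n - m).choose (ℓ - p)) ≤ 2 ^ ℓ * m ^ p * n.choose ℓ := by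
  refine Nat.le_of_mul_le_mul_right ?_ (Nat.mul_pos (factorial_pos p) (factorial_pos (ℓ - p)))
  calc n ^ p * (m.choose p * (n - m).choose (ℓ - p)) * (p ! * (ℓ - p)!)
      = n ^ p * m.descFactorial p * (n - m).descFactorial (ℓ - p) := by
        simp only [descFactorial_eq_factorial_mul_choose]; ring
    _ ≤ m ^ p * n.descFactorial p * (n - p).descFactorial (ℓ - p) :=
        Nat.mul_le_mul (pow_mul_descFactorial_le_pow_mul_descFactorial hmn p)
          (descFactorial_le _ (Nat.sub_le_sub_left hpm n))
    _ = m ^ p * (n.choose ℓ * ℓ !) := by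
        rw [Nat.mul_assoc, Nat.mul_comm (n.descFactorial p), descFactorial_mul_descFactorial hpℓ,
          descFactorial_eq_factorial_mul_choose, Nat.mul_comm (ℓ !)]
    _ ≤ m ^ p * (n.choose ℓ * (2 ^ ℓ * (p ! * (ℓ - p)!))) := by
        gcongr; exact factorial_le_two_pow_mul_factorial_mul_factorial hpℓ
    _ = 2 ^ ℓ * m ^ p * n.choose ℓ * (p ! * (ℓ - p)!) := by ring

end Nat

theorem choose_mul_choose_le_two_pow_mul_div_pow_mul_choose {n m ℓ p : ℕ} (hmn : m ≤ n)
    (hpm : p ≤ m) (hpℓ : p ≤ ℓ) :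
    (m.choose p * (n - m).choose (ℓ - p) : ℝ) ≤ 2 ^ ℓ * ((m : ℝ) / n) ^ p * n.choose ℓ := by
  rcases n.eq_zero_or_pos with rfl | hn
  · obtain rfl : m = 0 := by omega
    obtain rfl : p = 0 := by omega
    simp only [Nat.choose_self, Nat.cast_one, one_mul, pow_zero, mul_one]
    exact le_mul_of_one_le_left (Nat.cast_nonneg _) (one_le_pow₀ one_le_two)
  rw [div_pow, mul_div_assoc', div_mul_eq_mul_div, le_div_iff₀ (by positivity), mul_comm]
  exact_mod_cast Nat.pow_mul_choose_mul_choose_le hmn hpm hpℓ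

theorem pow_mul_pow_le_pow_mul_rpow_half {a x : ℝ} (ha : 1 ≤ a) (hx : 0 ≤ x) (hax : a * x ≤ 1)
    {ℓ p : ℕ} (h : ℓ ≤ 2 * p) : a ^ p * x ^ p ≤ a ^ ℓ * x ^ ((ℓ : ℝ) / 2) := by
  have hℓp : (ℓ : ℝ) / 2 ≤ p := by
    rw [div_le_iff₀ two_pos]; exact_mod_cast (by omega : ℓ ≤ p * 2)
  calc a ^ p * x ^ p = (a * x) ^ (p : ℝ) := by rw [Real.rpow_natCast, mul_pow]
    _ ≤ (a * x) ^ ((ℓ : ℝ) / 2) :=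
        Real.rpow_le_rpow_of_exponent_ge' (by positivity) hax (by positivity) hℓp
    _ = a ^ ((ℓ : ℝ) / 2) * x ^ ((ℓ : ℝ) / 2) := Real.mul_rpow (by positivity) hx
    _ ≤ a ^ (ℓ : ℝ) * x ^ ((ℓ : ℝ) / 2) := by
        gcongr
        exact half_le_self (Nat.cast_nonneg ℓ)
    _ = a ^ ℓ * x ^ ((ℓ : ℝ) / 2) := by rw [Real.rpow_natCast]

theorem pow_mul_pow_le_one {a x : ℝ} (ha : 1 ≤ a) (hx : 0 ≤ x) (hax : a ^ 2 * x ≤ 1)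
    {ℓ p : ℕ} (h : ℓ ≤ 2 * p) : a ^ ℓ * x ^ p ≤ 1 :=
  calc a ^ ℓ * x ^ p ≤ a ^ (2 * p) * x ^ p := by gcongr
    _ = (a ^ 2 * x) ^ p := by rw [pow_mul, mul_pow]
    _ ≤ 1 := pow_le_one₀ (by positivity) hax

theorem card_Icc_half_le {ℓ k : ℕ} (hk : k ≤ ℓ) :
    (#(Icc ((ℓ + 1) / 2) k) : ℝ) ≤ ℓ / 2 + 1 := by
  rw [Nat.card_Icc]
  have h : 2 * (k + 1 - (ℓ + 1) / 2) ≤ ℓ + 2 := by omega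
  have h' : (2 : ℝ) * (k + 1 - (ℓ + 1) / 2 : ℕ) ≤ ℓ + 2 := by exact_mod_cast h
  linarith

section

variable {n m ℓ p : ℕ}

theorem sq_three_mul_div_le_one (hm : 9 * m ≤ n) : (3 : ℝ) ^ 2 * (m / n) ≤ 1 := by
  rcases n.eq_zero_or_pos with rfl | hn
  · simp
  · rw [mul_div_assoc', div_le_one (by positivity)]; exact_mod_cast hm

theorem three_pow_mul_choose_mul_choose_le (hm : 9 * m ≤ n) (h2p : ℓ ≤ 2 * p) (hpℓ : p ≤ ℓ)
    (hpm : p ≤ m) :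
    (3 : ℝ) ^ p * m.choose p * (n - m).choose (ℓ - p)
      ≤ 3 ^ ℓ * 2 ^ ℓ * ((m : ℝ) / n) ^ ((ℓ : ℝ) / 2) * n.choose ℓ := by
  have hx : (0 : ℝ) ≤ m / n := by positivity
  have hx9 := sq_three_mul_div_le_one hm
  calc (3 : ℝ) ^ p * m.choose p * (n - m).choose (ℓ - p)
      ≤ 3 ^ p * (2 ^ ℓ * ((m : ℝ) / n) ^ p * n.choose ℓ) := by
        rw [mul_assoc]
        exact mul_le_mul_of_nonneg_left
          (choose_mul_choose_le_two_pow_mul_div_pow_mul_choose (by omega) hpm hpℓ) (by positivity)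
    _ = 2 ^ ℓ * n.choose ℓ * (3 ^ p * ((m : ℝ) / n) ^ p) := by ring
    _ ≤ 2 ^ ℓ * n.choose ℓ * (3 ^ ℓ * ((m : ℝ) / n) ^ ((ℓ : ℝ) / 2)) := by
        refine mul_le_mul_of_nonneg_left ?_ (by positivity)
        exact pow_mul_pow_le_pow_mul_rpow_half (by norm_num) hx (by linarith) h2p
    _ = 3 ^ ℓ * 2 ^ ℓ * ((m : ℝ) / n) ^ ((ℓ : ℝ) / 2) * n.choose ℓ := by ring

theorem choose_mul_three_pow_mul_choose_le (hm : 9 * m ≤ n) (h2p : ℓ ≤ 2 * p) (hpℓ : p ≤ ℓ)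
    (hpm : p ≤ m) :
    (m.choose p : ℝ) * 3 ^ ℓ * (n - m).choose (ℓ - p) ≤ 2 ^ ℓ * n.choose ℓ :=
  calc (m.choose p : ℝ) * 3 ^ ℓ * (n - m).choose (ℓ - p)
      ≤ 3 ^ ℓ * (2 ^ ℓ * ((m : ℝ) / n) ^ p * n.choose ℓ) := by
        rw [mul_right_comm, mul_comm]
        exact mul_le_mul_of_nonneg_left
          (choose_mul_choose_le_two_pow_mul_div_pow_mul_choose (by omega) hpm hpℓ) (by positivity)
    _ = 2 ^ ℓ * n.choose ℓ * (3 ^ ℓ * ((m : ℝ) / n) ^ p) := by ring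
    _ ≤ 2 ^ ℓ * n.choose ℓ :=
        mul_le_of_le_one_right (by positivity)
          (pow_mul_pow_le_one (by norm_num) (by positivity) (sq_three_mul_div_le_one hm) h2p)

end

theorem stmt_17_general (n m ℓ : ℕ) (hm : 9*m ≤ n) :
    (∀ p : ℕ, ℓ ≤ 2*p → p ≤ min ℓ m →
      (3:ℝ)^p * (m.choose p : ℝ) * ((n-m).choose (ℓ-p) : ℝ)
        ≤ (3:ℝ)^ℓ * 2^ℓ * ((m:ℝ)/(n:ℝ))^((ℓ:ℝ)/2) * (n.choose ℓ : ℝ)) ∧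
    ∑ p ∈ Finset.Icc ((ℓ+1)/2) (min ℓ m),
        (m.choose p : ℝ) * (3:ℝ)^ℓ * ((n-m).choose (ℓ-p) : ℝ)
      ≤ ((ℓ:ℝ)/2 + 1) * 2^ℓ * (n.choose ℓ : ℝ) := by
  refine ⟨fun p h2p hp => three_pow_mul_choose_mul_choose_le hm h2p (le_min_iff.1 hp).1
    (le_min_iff.1 hp).2, ?_⟩
  have hterm : ∀ p ∈ Icc ((ℓ + 1) / 2) (min ℓ m),
      (m.choose p : ℝ) * 3 ^ ℓ * (n - m).choose (ℓ - p) ≤ 2 ^ ℓ * n.choose ℓ := by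
    intro p hp
    obtain ⟨h2p, hp⟩ := mem_Icc.1 hp
    exact choose_mul_three_pow_mul_choose_le hm (by omega) (le_min_iff.1 hp).1 (le_min_iff.1 hp).2
  calc _ ≤ #(Icc ((ℓ + 1) / 2) (min ℓ m)) • ((2 : ℝ) ^ ℓ * n.choose ℓ) :=
        sum_le_card_nsmul _ _ _ hterm
    _ ≤ ((ℓ : ℝ) / 2 + 1) * (2 ^ ℓ * n.choose ℓ) := by
        rw [nsmul_eq_mul]; gcongr; exact card_Icc_half_le (min_le_left ℓ m)
    _ = ((ℓ : ℝ) / 2 + 1) * 2 ^ ℓ * n.choose ℓ := by ring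

/-- For `ℓ/2 ≤ p ≤ min(ℓ,m)` with `m/n ≤ 1/9` and `ℓ ≤ n`, one has
`3^p·C(m,p)·C(n−m,ℓ−p) ≤ 3^ℓ·2^ℓ·(m/n)^{ℓ/2}·C(n,ℓ)`; in particular
`Σ_{p=⌈ℓ/2⌉}^{min(ℓ,m)} C(m,p)·3^ℓ·C(n−m,ℓ−p) ≤ (ℓ/2+1)·2^ℓ·C(n,ℓ)`. -/
theorem stmt_17 (n m ℓ : ℕ) (hn : 0 < n) (hm : 9*m ≤ n) (hℓ : ℓ ≤ n) :
    (∀ p : ℕ, ℓ ≤ 2*p → p ≤ min ℓ m →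
      (3:ℝ)^p * (m.choose p : ℝ) * ((n-m).choose (ℓ-p) : ℝ)
        ≤ (3:ℝ)^ℓ * 2^ℓ * ((m:ℝ)/(n:ℝ))^((ℓ:ℝ)/2) * (n.choose ℓ : ℝ)) ∧
    ∑ p ∈ Finset.Icc ((ℓ+1)/2) (min ℓ m),
        (m.choose p : ℝ) * (3:ℝ)^ℓ * ((n-m).choose (ℓ-p) : ℝ)
      ≤ ((ℓ:ℝ)/2 + 1) * 2^ℓ * (n.choose ℓ : ℝ) :=
  stmt_17_general n m ℓ hm
end

section
/- Let N_S be as above (pairs of a uniformly random perfect matching internal to S). If |S| − 1 ≤ β(n−1) and β > 0, then Pr[N_S > β|S|] ≤ 2(n−1)/((2β(n−1) − (|S|−1))²). -/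
/-!
Write `N_S` as the sum over pairs `i < j` in `S` of the indicators of `M i = j`. Its mean is
`C(s,2)/(n−1)`. In the second moment, two distinct pairs sharing a vertex contribute nothing,
and the `C(s−2,2)` pairs disjoint from a given one contribute `1/((n−1)(n−3))` each, so
`E[N_S²] = C(s,2) (1/(n−1) + C(s−2,2)/((n−1)(n−3)))`, which gives `Var N_S ≤ E N_S` for `s ≤ n`.
Chebyshev's inequality at distance `βs − E N_S = s(2β(n−1) − (s−1))/(2(n−1))` then gives the bound.
-/

open MeasureTheory

/-- The number of pairs of the matching `M` with both endpoints inside `S`: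
`N_S = Σ_{i<j, i,j∈S} 1[{i,j} matched]`. -/
def numInternalPairs {n : ℕ} (S : Finset (Fin n)) (M : Fin n → Fin n) : ℕ :=
  ((S ×ˢ S).filter (fun p => p.1 < p.2 ∧ M p.1 = p.2)).card

open Finset

section IndicatorSums

variable {Ω ι : Type*} [MeasurableSpace Ω] {μ : Measure Ω} [IsFiniteMeasure μ]
  {A : ι → Set Ω}

lemma memLp_sum_indicator_one (s : Finset ι) (hA : ∀ i, MeasurableSet (A i)) :
    MemLp (fun ω => ∑ i ∈ s, (A i).indicator (1 : Ω → ℝ) ω) 2 μ :=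
  memLp_finsetSum s fun i _ => (memLp_const (1 : ℝ)).indicator (hA i)

lemma integral_sum_indicator_one (s : Finset ι) (hA : ∀ i, MeasurableSet (A i)) :
    ∫ ω, ∑ i ∈ s, (A i).indicator (1 : Ω → ℝ) ω ∂μ = ∑ i ∈ s, μ.real (A i) := by
  rw [integral_finsetSum s fun i _ => (integrable_const 1).indicator (hA i)]
  exact sum_congr rfl fun i _ => integral_indicator_one (hA i)

lemma integral_sum_indicator_one_sq (s : Finset ι) (hA : ∀ i, MeasurableSet (A i)) :
    ∫ ω, (∑ i ∈ s, (A i).indicator (1 : Ω → ℝ) ω) ^ 2 ∂μ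
      = ∑ i ∈ s, ∑ j ∈ s, μ.real (A i ∩ A j) := by
  have hsq : ∀ ω, (∑ i ∈ s, (A i).indicator (1 : Ω → ℝ) ω) ^ 2
      = ∑ ij ∈ s ×ˢ s, (A ij.1 ∩ A ij.2).indicator 1 ω := fun ω => by
    simp only [sq, sum_mul_sum, sum_product, Set.inter_indicator_one, Pi.mul_apply]
  simp_rw [hsq]
  exact (integral_sum_indicator_one (A := fun ij : ι × ι => A ij.1 ∩ A ij.2) _
    fun ij => (hA ij.1).inter (hA ij.2)).trans (sum_product _ _ _)

open ProbabilityTheory in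
lemma measureReal_gt_le_variance_div_sq {X : Ω → ℝ} (hX : MemLp X 2 μ) {t : ℝ}
    (ht : μ[X] < t) : μ.real {ω | t < X ω} ≤ variance X μ / (t - μ[X]) ^ 2 := by
  have hsub : {ω | t < X ω} ⊆ {ω | t - μ[X] ≤ |X ω - μ[X]|} := fun ω (hω : t < X ω) =>
    show t - μ[X] ≤ |X ω - μ[X]| from (sub_le_sub_right hω.le _).trans (le_abs_self _)
  calc μ.real {ω | t < X ω} ≤ μ.real {ω | t - μ[X] ≤ |X ω - μ[X]|} := measureReal_mono hsub
    _ ≤ variance X μ / (t - μ[X]) ^ 2 :=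
      ENNReal.toReal_le_of_le_ofReal (div_nonneg (variance_nonneg X μ) (sq_nonneg _))
        (meas_ge_le_variance_div_sq hX (sub_pos.2 ht))

lemma sum_measureReal_inter_preimage_singleton {β : Type*} [Fintype β] {f : Ω → β}
    (hf : ∀ b, MeasurableSet (f ⁻¹' {b})) (B : Set Ω) : ∑ b, μ.real (B ∩ f ⁻¹' {b}) = μ.real B := by
  have := sum_measureReal_preimage_singleton (μ := μ.restrict B) univ fun b _ => hf b
  simpa [measureReal_restrict_apply (hf _), Set.inter_comm] using this

end IndicatorSums

lemma cast_choose_two_sub_two_mul_le {s n : ℕ} (hsn : s ≤ n) (hn : 3 ≤ n) :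
    ((s - 2).choose 2 : ℝ) * ((n : ℝ) - 1) ≤ (s.choose 2 : ℝ) * ((n : ℝ) - 3) := by
  have hn' : (3 : ℝ) ≤ n := by exact_mod_cast hn
  rcases lt_or_ge s 3 with hs | hs
  · rw [Nat.choose_eq_zero_of_lt (by omega : s - 2 < 2)]
    simp only [Nat.cast_zero, zero_mul]
    exact mul_nonneg (Nat.cast_nonneg _) (by linarith)
  have hs' : (3 : ℝ) ≤ s := by exact_mod_cast hs
  have hsn' : (s : ℝ) ≤ n := by exact_mod_cast hsn
  rw [Nat.cast_choose_two, Nat.cast_choose_two, Nat.cast_sub (by omega)]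
  push_cast
  nlinarith [mul_nonneg (sub_nonneg.2 hsn') (by linarith : (0 : ℝ) ≤ 4 * s - 6),
    mul_nonneg (by linarith : (0 : ℝ) ≤ s - 1) (by linarith : (0 : ℝ) ≤ s - 3)]

/-- With `D = 2βm − (s − 1)` one has `βs − s(s − 1)/(2m) = sD/(2m)`, so the left side equals
`2m(s − 1)/(sD²)`. -/
lemma choose_two_div_div_sq_le {s m β : ℝ} (hs : 1 ≤ s) (hm : 0 < m)
    (hD : 0 < 2 * β * m - (s - 1)) :
    s * (s - 1) / 2 / m / (β * s - s * (s - 1) / 2 / m) ^ 2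
      ≤ 2 * m / (2 * β * m - (s - 1)) ^ 2 := by
  have hgap : β * s - s * (s - 1) / 2 / m = s * (2 * β * m - (s - 1)) / (2 * m) := by
    field_simp
  rw [hgap, div_le_div_iff₀ (by positivity) (by positivity)]
  field_simp
  exact mul_le_mul_of_nonneg_right (by linarith) (sq_nonneg _)

lemma numInternalPairs_eq_sum_indicator {Ω : Type*} {n : ℕ} (S : Finset (Fin n))
    (M : Ω → Fin n → Fin n) (ω : Ω) :
    (numInternalPairs S (M ω) : ℝ)
      = ∑ p ∈ {p ∈ S ×ˢ S | p.1 < p.2}, {ω | M ω p.1 = p.2}.indicator (1 : Ω → ℝ) ω := by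
  rw [numInternalPairs, ← filter_filter, card_filter]
  push_cast
  exact sum_congr rfl fun p _ => by simp [Set.indicator_apply]

section Matching

variable {Ω : Type*} [MeasurableSpace Ω] {μ : Measure Ω} {n : ℕ} {M : Ω → Fin n → Fin n}

structure HasMatchingPairProbabilities (μ : Measure Ω) (M : Ω → Fin n → Fin n) : Prop where
  measurableSet : ∀ i j : Fin n, MeasurableSet {ω | M ω i = j}
  pair : ∀ i j : Fin n, i ≠ j → μ.real {ω | M ω i = j} = 1 / ((n : ℝ) - 1)
  pair₂ : ∀ i j k l : Fin n, i ≠ j → k ≠ l → i ≠ k → i ≠ l → j ≠ k → j ≠ l →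
    μ.real {ω | M ω i = j ∧ M ω k = l} = 1 / (((n : ℝ) - 1) * ((n : ℝ) - 3))

namespace HasMatchingPairProbabilities

variable [IsFiniteMeasure μ]

/-- Given `M i = j`, the `n - 3` values of `M k` outside `{i, j, k}` already carry the whole
probability `1 / (n - 1)`, so the three remaining values are null. -/
lemma measureReal_eq_zero_of_mem (h : HasMatchingPairProbabilities μ M) (hn : 4 ≤ n)
    {i j k m : Fin n} (hij : i ≠ j) (hik : i ≠ k) (hjk : j ≠ k)
    (hm : m ∈ ({i, j, k} : Finset (Fin n))) :
    μ.real {ω | M ω i = j ∧ M ω k = m} = 0 := by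
  set T : Finset (Fin n) := {i, j, k}
  have hTcard : #T = 3 := card_eq_three.2 ⟨i, j, k, hij, hik, hjk, rfl⟩
  have htotal : ∑ m, μ.real {ω | M ω i = j ∧ M ω k = m} = 1 / ((n : ℝ) - 1) :=
    (sum_measureReal_inter_preimage_singleton (f := fun ω => M ω k)
      (fun m => h.measurableSet k m) _).trans (h.pair i j hij)
  have houtside : ∑ m ∈ univ \ T, μ.real {ω | M ω i = j ∧ M ω k = m} = 1 / ((n : ℝ) - 1) := by
    have hn3 : ((n : ℝ) - 3) ≠ 0 := by
      rw [sub_ne_zero]; exact_mod_cast (by omega : n ≠ 3)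
    have hconst : ∀ m ∈ univ \ T, μ.real {ω | M ω i = j ∧ M ω k = m}
        = 1 / (((n : ℝ) - 1) * ((n : ℝ) - 3)) := fun m hm => by
      simp only [T, mem_sdiff, mem_univ, true_and, mem_insert, mem_singleton, not_or] at hm
      exact h.pair₂ i j k m hij (Ne.symm hm.2.2) hik (Ne.symm hm.1) hjk (Ne.symm hm.2.1)
    rw [sum_congr rfl hconst, sum_const, card_sdiff_of_subset (subset_univ T), hTcard,
      card_univ, Fintype.card_fin, nsmul_eq_mul, Nat.cast_sub (by omega)]
    push_cast
    field_simp
  have hinside : ∑ m ∈ T, μ.real {ω | M ω i = j ∧ M ω k = m} = 0 := by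
    linarith [sum_sdiff (f := fun m => μ.real {ω | M ω i = j ∧ M ω k = m}) (subset_univ T)]
  exact (sum_eq_zero_iff_of_nonneg fun _ _ => measureReal_nonneg).1 hinside m hm

lemma measureReal_inter_eq_zero_of_ne (h : HasMatchingPairProbabilities μ M) (hn : 4 ≤ n)
    {p q : Fin n × Fin n} (hp : p.1 < p.2) (hq : q.1 < q.2) (hqp : q ≠ p)
    (hshare : q.1 = p.1 ∨ q.1 = p.2 ∨ q.2 = p.1 ∨ q.2 = p.2) :
    μ.real ({ω | M ω p.1 = p.2} ∩ {ω | M ω q.1 = q.2}) = 0 := by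
  obtain ⟨a, b⟩ := p
  obtain ⟨c, d⟩ := q
  dsimp only at hp hq hshare ⊢
  rcases hshare with rfl | rfl | rfl | rfl
  · have hdb : d ≠ b := fun hdb => hqp (by rw [hdb])
    have hempty : {ω | M ω c = b} ∩ {ω | M ω c = d} = ∅ :=
      Set.eq_empty_of_forall_notMem fun _ hω => hdb (hω.2.symm.trans hω.1)
    rw [hempty, measureReal_empty]
  · rw [Set.inter_comm]
    exact h.measureReal_eq_zero_of_mem hn hq.ne hp.ne' (hp.trans hq).ne' (by simp)
  · exact h.measureReal_eq_zero_of_mem hn hp.ne hq.ne' (hq.trans hp).ne' (by simp)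
  · have hca : c ≠ a := fun hca => hqp (by rw [hca])
    exact h.measureReal_eq_zero_of_mem hn hp.ne hca.symm hq.ne' (by simp)

lemma sum_measureReal_inter (h : HasMatchingPairProbabilities μ M) (hn : 4 ≤ n)
    {S : Finset (Fin n)} {p : Fin n × Fin n} (hp : p ∈ {q ∈ S ×ˢ S | q.1 < q.2}) :
    ∑ q ∈ {q ∈ S ×ˢ S | q.1 < q.2}, μ.real ({ω | M ω p.1 = p.2} ∩ {ω | M ω q.1 = q.2})
      = 1 / ((n : ℝ) - 1) + ((#S - 2).choose 2 : ℝ) * (1 / (((n : ℝ) - 1) * ((n : ℝ) - 3))) := by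
  set T := S \ {p.1, p.2}
  obtain ⟨hp₁, hp₂, hplt⟩ : p.1 ∈ S ∧ p.2 ∈ S ∧ p.1 < p.2 := by simpa [and_assoc] using hp
  have hTS : T ⊆ S := sdiff_subset
  have hT : #T = #S - 2 := by
    rw [card_sdiff_of_subset (insert_subset hp₁ (singleton_subset_iff.2 hp₂)), card_pair hplt.ne]
  have key : ∀ q ∈ {q ∈ S ×ˢ S | q.1 < q.2},
      μ.real ({ω | M ω p.1 = p.2} ∩ {ω | M ω q.1 = q.2})
        = (if q = p then 1 / ((n : ℝ) - 1) else 0)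
          + (if q ∈ {q ∈ T ×ˢ T | q.1 < q.2} then 1 / (((n : ℝ) - 1) * ((n : ℝ) - 3))
            else 0) := by
    intro q hq
    simp only [T, mem_filter, mem_product, mem_sdiff, mem_insert, mem_singleton, not_or] at hq ⊢
    by_cases hqp : q = p
    · subst hqp
      simp [Set.inter_self, h.pair _ _ hplt.ne]
    by_cases hqT : (q.1 ∈ S ∧ q.1 ≠ p.1 ∧ q.1 ≠ p.2) ∧ (q.2 ∈ S ∧ q.2 ≠ p.1 ∧ q.2 ≠ p.2)
    · rw [if_neg hqp, if_pos ⟨hqT, hq.2⟩, zero_add]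
      exact h.pair₂ _ _ _ _ hplt.ne hq.2.ne (Ne.symm hqT.1.2.1) (Ne.symm hqT.2.2.1)
        (Ne.symm hqT.1.2.2) (Ne.symm hqT.2.2.2)
    · rw [if_neg hqp, if_neg fun h => hqT h.1, add_zero]
      exact h.measureReal_inter_eq_zero_of_ne hn hplt hq.2 hqp (by tauto)
  rw [sum_congr rfl key, sum_add_distrib, sum_ite_eq', if_pos hp, sum_ite_mem,
    inter_eq_right.2 (filter_subset_filter _ (product_subset_product hTS hTS)),
    sum_const, card_product_filter_lt, hT, nsmul_eq_mul]

lemma memLp_numInternalPairs (h : HasMatchingPairProbabilities μ M) (S : Finset (Fin n)) :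
    MemLp (fun ω => (numInternalPairs S (M ω) : ℝ)) 2 μ := by
  simp_rw [numInternalPairs_eq_sum_indicator]
  exact memLp_sum_indicator_one _ fun p => h.measurableSet p.1 p.2

lemma integral_numInternalPairs (h : HasMatchingPairProbabilities μ M) (S : Finset (Fin n)) :
    ∫ ω, (numInternalPairs S (M ω) : ℝ) ∂μ = ((#S).choose 2 : ℝ) / ((n : ℝ) - 1) := by
  simp_rw [numInternalPairs_eq_sum_indicator]
  rw [integral_sum_indicator_one (A := fun p : Fin n × Fin n => {ω | M ω p.1 = p.2}) _
      fun p => h.measurableSet p.1 p.2,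
    sum_congr rfl fun p hp => h.pair _ _ (mem_filter.1 hp).2.ne, sum_const,
    card_product_filter_lt, nsmul_eq_mul, mul_one_div]

lemma integral_numInternalPairs_sq (h : HasMatchingPairProbabilities μ M) (hn : 4 ≤ n)
    (S : Finset (Fin n)) :
    ∫ ω, (numInternalPairs S (M ω) : ℝ) ^ 2 ∂μ = ((#S).choose 2 : ℝ)
      * (1 / ((n : ℝ) - 1) + ((#S - 2).choose 2 : ℝ) * (1 / (((n : ℝ) - 1) * ((n : ℝ) - 3)))) := by
  simp_rw [numInternalPairs_eq_sum_indicator]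
  rw [integral_sum_indicator_one_sq (A := fun p : Fin n × Fin n => {ω | M ω p.1 = p.2}) _
      fun p => h.measurableSet p.1 p.2,
    sum_congr rfl fun p hp => h.sum_measureReal_inter hn hp, sum_const,
    card_product_filter_lt, nsmul_eq_mul]

open ProbabilityTheory in
lemma variance_numInternalPairs_le [IsProbabilityMeasure μ]
    (h : HasMatchingPairProbabilities μ M) (hn : 4 ≤ n) (S : Finset (Fin n)) :
    variance (fun ω => (numInternalPairs S (M ω) : ℝ)) μ
      ≤ μ[fun ω => (numInternalPairs S (M ω) : ℝ)] := by
  rw [variance_eq_sub (h.memLp_numInternalPairs S)]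
  simp only [Pi.pow_apply]
  rw [h.integral_numInternalPairs_sq hn S, h.integral_numInternalPairs S]
  have hn' : (4 : ℝ) ≤ n := by exact_mod_cast hn
  have hm : (0 : ℝ) < n - 1 := by linarith
  have hk : (0 : ℝ) < n - 3 := by linarith
  have hcross : ((#S - 2).choose 2 : ℝ) * (1 / (((n : ℝ) - 1) * ((n : ℝ) - 3)))
      ≤ ((#S).choose 2 : ℝ) / ((n : ℝ) - 1) ^ 2 := by
    rw [mul_one_div, div_le_div_iff₀ (by positivity) (by positivity)]
    nlinarith [cast_choose_two_sub_two_mul_le (by simpa using card_le_univ S) (by omega : 3 ≤ n)]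
  have ha : (0 : ℝ) ≤ (#S).choose 2 := Nat.cast_nonneg _
  calc _ ≤ ((#S).choose 2 : ℝ) * (1 / ((n : ℝ) - 1) + ((#S).choose 2 : ℝ) / ((n : ℝ) - 1) ^ 2)
        - (((#S).choose 2 : ℝ) / ((n : ℝ) - 1)) ^ 2 := by gcongr
    _ = _ := by field_simp; ring

end HasMatchingPairProbabilities

end Matching

theorem stmt_19_general {Ω : Type*} [MeasurableSpace Ω] (ℙ : Measure Ω)
    [IsProbabilityMeasure ℙ] (n : ℕ) (hn : Even n)
    (M : Ω → Fin n → Fin n) (S : Finset (Fin n)) (hS : 3 ≤ S.card)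
    (hmeas : ∀ i j : Fin n, MeasurableSet {ω | M ω i = j})
    (hpair : ∀ i j : Fin n, i ≠ j → (ℙ {ω | M ω i = j}).toReal = 1/((n:ℝ)-1))
    (hpair2 : ∀ i j k l : Fin n, i ≠ j → k ≠ l → i ≠ k → i ≠ l → j ≠ k → j ≠ l →
      (ℙ {ω | M ω i = j ∧ M ω k = l}).toReal = 1/(((n:ℝ)-1)*((n:ℝ)-3)))
    (β : ℝ) (hSβ : (S.card : ℝ) - 1 ≤ β * ((n:ℝ)-1)) :
    (ℙ {ω | β * (S.card : ℝ) < (numInternalPairs S (M ω) : ℝ)}).toReal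
      ≤ 2*((n:ℝ)-1) / (2*β*((n:ℝ)-1) - ((S.card : ℝ)-1))^2 := by
  have h : HasMatchingPairProbabilities ℙ M := ⟨hmeas, hpair, hpair2⟩
  have hn4 : 4 ≤ n := by
    obtain ⟨r, rfl⟩ := hn
    have := card_le_univ S
    rw [Fintype.card_fin] at this
    omega
  have hm : (0 : ℝ) < n - 1 := by
    have : (4 : ℝ) ≤ n := by exact_mod_cast hn4
    linarith
  have hs : (3 : ℝ) ≤ S.card := by exact_mod_cast hS
  have hD : 0 < 2 * β * ((n : ℝ) - 1) - ((S.card : ℝ) - 1) := by linarith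
  have hE : ∫ ω, (numInternalPairs S (M ω) : ℝ) ∂ℙ
      = S.card * (S.card - 1) / 2 / ((n : ℝ) - 1) := by
    rw [h.integral_numInternalPairs, Nat.cast_choose_two]
  have ht : ∫ ω, (numInternalPairs S (M ω) : ℝ) ∂ℙ < β * S.card := by
    rw [hE, div_div, div_lt_iff₀ (by positivity)]
    nlinarith
  calc ℙ.real {ω | β * (S.card : ℝ) < (numInternalPairs S (M ω) : ℝ)}
      ≤ ProbabilityTheory.variance (fun ω => (numInternalPairs S (M ω) : ℝ)) ℙ
          / (β * S.card - ∫ ω, (numInternalPairs S (M ω) : ℝ) ∂ℙ) ^ 2 :=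
        measureReal_gt_le_variance_div_sq (h.memLp_numInternalPairs S) ht
    _ ≤ (∫ ω, (numInternalPairs S (M ω) : ℝ) ∂ℙ)
          / (β * S.card - ∫ ω, (numInternalPairs S (M ω) : ℝ) ∂ℙ) ^ 2 := by
        gcongr
        exact h.variance_numInternalPairs_le hn4 S
    _ ≤ _ := by
        rw [hE]
        exact choose_two_div_div_sq_le (by linarith) hm hD

/-- Let N_S be the number of pairs of a uniformly random perfect
matching of {1,…,n} (n even) internal to a fixed subset S with `3 ≤ |S| ≤ n`
(matching pair probabilities `1/(n−1)` and `1/((n−1)(n−3))` as before).  If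
`|S| − 1 ≤ β(n−1)` and `β > 0`, then
`Pr[N_S > β|S|] ≤ 2(n−1)/((2β(n−1) − (|S|−1))²)`. -/
theorem stmt_19 {Ω : Type*} [MeasurableSpace Ω] (ℙ : Measure Ω)
    [IsProbabilityMeasure ℙ] (n : ℕ) (hn : Even n)
    (M : Ω → Fin n → Fin n) (S : Finset (Fin n)) (hS : 3 ≤ S.card)
    (hmeas : ∀ i j : Fin n, MeasurableSet {ω | M ω i = j})
    (hpair : ∀ i j : Fin n, i ≠ j → (ℙ {ω | M ω i = j}).toReal = 1/((n:ℝ)-1))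
    (hpair2 : ∀ i j k l : Fin n, i ≠ j → k ≠ l → i ≠ k → i ≠ l → j ≠ k → j ≠ l →
      (ℙ {ω | M ω i = j ∧ M ω k = l}).toReal = 1/(((n:ℝ)-1)*((n:ℝ)-3)))
    (β : ℝ) (hβ : 0 < β) (hSβ : (S.card : ℝ) - 1 ≤ β * ((n:ℝ)-1)) :
    (ℙ {ω | β * (S.card : ℝ) < (numInternalPairs S (M ω) : ℝ)}).toReal
      ≤ 2*((n:ℝ)-1) / (2*β*((n:ℝ)-1) - ((S.card : ℝ)-1))^2 :=
  stmt_19_general ℙ n hn M S hS hmeas hpair hpair2 β hSβ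
end
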